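/- arXiv:1008.3808 — 14 statements merged into one kernel-verified Lean document; each statement's English description precedes it below -/
import Mathlib

section
/- For all natural numbers n and all functions u, v : ℝ → ℝ that are n times continuously differentiable, and for every x ∈ ℝ, one has v(x) · u^{(n)}(x) = Σ_{j=0}^{n} (−1)^j · C(n,j) · d^{n−j}/dx^{n−j} [ u · v^{(j)} ] (x), where C(n,j) is the binomial coefficient, v^{(j)} denotes the j-th derivative of v, and d^{n−j}/dx^{n−j} denotes the (n−j)-th iterated derivative of the indicated product function. -/
/-!
By the Leibniz rule, `(u * v^{(j)})^{(n-j)} = ∑ₖ C(n-j,k) u^{(k)} v^{(n-k)}`. After exchanging the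
two sums, the coefficient of `u^{(k)} v^{(n-k)}` is `∑ⱼ (-1)^j C(n,j) C(n-j,k) = C(n,k) (1 - 1)^(n-k)`,
which vanishes unless `k = n`.
-/

open Finset

theorem Nat.choose_mul_choose_sub_comm (n j k : ℕ) :
    n.choose j * (n - j).choose k = n.choose k * (n - k).choose j := by
  rcases le_or_gt (j + k) n with h | h
  · have := Nat.choose_mul (n := n) (k := n - j) (s := k) (by omega)
    rwa [Nat.choose_symm (by omega),
      Nat.choose_symm_of_eq_add (by omega : n - k = (n - j - k) + j)] at this
  · grind

theorem Finset.sum_range_neg_one_pow_mul_choose {R : Type*} [CommRing R] {m n : ℕ} (h : m ≤ n) :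
    ∑ j ∈ range (n + 1), (-1 : R) ^ j * m.choose j = if m = 0 then 1 else 0 := by
  have hbinom : ∑ j ∈ range (m + 1), (-1 : R) ^ j * m.choose j = 0 ^ m := by
    simpa using (add_pow (-1 : R) 1 m).symm
  rw [← zero_pow_eq, ← hbinom]
  refine (sum_subset (range_subset_range.2 (by omega)) fun j _ hj => ?_).symm
  rw [Nat.choose_eq_zero_of_lt (by simpa using hj), Nat.cast_zero, mul_zero]

theorem Finset.sum_range_neg_one_pow_mul_choose_mul_choose {R : Type*} [CommRing R] (n k : ℕ) :
    ∑ j ∈ range (n + 1), (-1 : R) ^ j * n.choose j * (n - j).choose k =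
      if k = n then 1 else 0 := by
  have hswap (j : ℕ) : (-1 : R) ^ j * n.choose j * (n - j).choose k =
      n.choose k * ((-1) ^ j * (n - k).choose j) := by
    rw [mul_assoc, ← Nat.cast_mul, Nat.choose_mul_choose_sub_comm, Nat.cast_mul]; ring
  simp_rw [hswap, ← mul_sum]
  rcases lt_or_ge n k with hnk | hkn
  · simp [Nat.choose_eq_zero_of_lt hnk, hnk.ne']
  · rw [sum_range_neg_one_pow_mul_choose (Nat.sub_le n k)]
    rcases eq_or_ne k n with rfl | hk
    · simp
    · simp [hk, show n - k ≠ 0 by omega]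

section

variable {𝕜 𝔸 : Type*} [NontriviallyNormedField 𝕜] [NormedCommRing 𝔸] [NormedAlgebra 𝕜 𝔸]

theorem iteratedDeriv_iteratedDeriv {F : Type*} [NormedAddCommGroup F] [NormedSpace 𝕜 F]
    (m j : ℕ) (f : 𝕜 → F) : iteratedDeriv m (iteratedDeriv j f) = iteratedDeriv (m + j) f := by
  simp only [iteratedDeriv_eq_iterate, Function.iterate_add_apply]

theorem iteratedDeriv_fun_mul_iteratedDeriv {u v : 𝕜 → 𝔸} {n j : ℕ} (hj : j ≤ n)
    (hu : ContDiff 𝕜 (n - j : ℕ) u) (hv : ContDiff 𝕜 n v) (x : 𝕜) :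
    iteratedDeriv (n - j) (fun y => u y * iteratedDeriv j v y) x =
      ∑ k ∈ range (n + 1), (n - j).choose k * (iteratedDeriv k u x * iteratedDeriv (n - k) v x) := by
  have hvj : ContDiff 𝕜 (n - j : ℕ) (iteratedDeriv j v) := by
    rw [iteratedDeriv_eq_iterate]
    exact ContDiff.iterate_deriv' _ _ (by rwa [Nat.sub_add_cancel hj])
  rw [iteratedDeriv_fun_mul hu.contDiffAt hvj.contDiffAt]
  refine sum_subset_zero_on_sdiff (range_subset_range.2 (by omega)) (fun k hk => ?_)
    (fun k hk => ?_)
  · rw [Nat.choose_eq_zero_of_lt (by simp at hk; omega)]; simp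
  · rw [iteratedDeriv_iteratedDeriv, mul_assoc, show n - j - k + j = n - k by simp at hk; omega]

theorem mul_iteratedDeriv_eq_sum_neg_one_pow_mul_choose {u v : 𝕜 → 𝔸} {n : ℕ}
    (hu : ContDiff 𝕜 n u) (hv : ContDiff 𝕜 n v) (x : 𝕜) :
    v x * iteratedDeriv n u x =
      ∑ j ∈ range (n + 1), (-1 : 𝔸) ^ j * n.choose j *
        iteratedDeriv (n - j) (fun y => u y * iteratedDeriv j v y) x := by
  calc v x * iteratedDeriv n u x
      = ∑ k ∈ range (n + 1), if k = n then iteratedDeriv k u x * iteratedDeriv (n - k) v x else 0 := by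
        simp [mul_comm]
    _ = ∑ k ∈ range (n + 1), ∑ j ∈ range (n + 1), (-1 : 𝔸) ^ j * n.choose j * (n - j).choose k *
          (iteratedDeriv k u x * iteratedDeriv (n - k) v x) := by
        simp_rw [← sum_mul, sum_range_neg_one_pow_mul_choose_mul_choose, ite_mul, one_mul, zero_mul]
    _ = _ := by
        rw [sum_comm]
        refine sum_congr rfl fun j hj => ?_
        rw [iteratedDeriv_fun_mul_iteratedDeriv (by simpa [Nat.lt_succ_iff] using hj)
          (hu.of_le (by exact_mod_cast Nat.sub_le n j)) hv, mul_sum]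
        simp_rw [mul_assoc]

end

theorem statement_0 (n : ℕ) (u v : ℝ → ℝ)
    (hu : ContDiff ℝ n u) (hv : ContDiff ℝ n v) (x : ℝ) :
    v x * iteratedDeriv n u x =
      ∑ j ∈ Finset.range (n + 1),
        (-1 : ℝ) ^ j * (n.choose j : ℝ) *
          iteratedDeriv (n - j) (fun y => u y * iteratedDeriv j v y) x :=
  mul_iteratedDeriv_eq_sum_neg_one_pow_mul_choose hu hv x
end

section
/- For every natural number k, every function f : ℝ → ℝ of class C^k, and every x ∈ ℝ, the k-th derivative of the composite x ↦ f(x²) satisfies d^k/dx^k f(x²) = Σ_{j=0}^{⌊k/2⌋} (k! / (j! · (k−2j)!)) · (2x)^{k−2j} · f^{(k−j)}(x²), where f^{(k−j)} denotes the (k−j)-th derivative of f. -/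
/-!
Induction on `k`. Differentiating a summand `c (2x)^(k-2j) f^(k-j)(x²)` gives one term that
raises the order of the derivative of `f` (it lands at index `j` of level `k+1`) and one that
lowers the power of `2x` (index `j+1`). Collecting terms, the coefficients
`c k j = k! / (j! (k-2j)!)` must satisfy `c (k+1) (j+1) = c k (j+1) + 2 (k-2j) c k j`,
with the first summand absent when `k = 2j+1`.
-/

open Finset
open scoped Nat

noncomputable def sqCoeff (k j : ℕ) : ℝ := k ! / (j ! * (k - 2 * j)!)

/-- With `t = 2x` and `F m = f^(m)(x²)` this is the right-hand side of the formula. -/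
noncomputable def sqSum (k : ℕ) (t : ℝ) (F : ℕ → ℝ) : ℝ :=
  ∑ j ∈ range (k / 2 + 1), sqCoeff k j * t ^ (k - 2 * j) * F (k - j)

lemma sqCoeff_zero_right (k : ℕ) : sqCoeff k 0 = 1 := by
  simp [sqCoeff, Nat.factorial_ne_zero]

lemma sqCoeff_succ_succ (j d : ℕ) :
    sqCoeff (2 * j + d + 3) (j + 1) =
      sqCoeff (2 * j + d + 2) (j + 1) + 2 * (d + 2) * sqCoeff (2 * j + d + 2) j := by
  rw [sqCoeff, sqCoeff, sqCoeff, show 2 * j + d + 3 - 2 * (j + 1) = d + 1 by omega,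
    show 2 * j + d + 2 - 2 * (j + 1) = d by omega, show 2 * j + d + 2 - 2 * j = d + 2 by omega,
    Nat.factorial_succ (2 * j + d + 2), Nat.factorial_succ (d + 1), Nat.factorial_succ d,
    Nat.factorial_succ j]
  push_cast
  field_simp
  ring

lemma sqCoeff_two_mul_add_two (m : ℕ) :
    sqCoeff (2 * m + 2) (m + 1) = 2 * sqCoeff (2 * m + 1) m := by
  rw [sqCoeff, sqCoeff, show 2 * m + 2 - 2 * (m + 1) = 0 by omega,
    show 2 * m + 1 - 2 * m = 1 by omega, Nat.factorial_succ (2 * m + 1), Nat.factorial_succ m]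
  push_cast
  field_simp
  ring

lemma sqTerm_succ_succ (t : ℝ) (F : ℕ → ℝ) {k j : ℕ} (h : 2 * j + 2 ≤ k) :
    sqCoeff (k + 1) (j + 1) * t ^ (k + 1 - 2 * (j + 1)) * F (k + 1 - (j + 1)) =
      t * (sqCoeff k (j + 1) * t ^ (k - 2 * (j + 1)) * F (k - (j + 1) + 1)) +
        2 * (((k - 2 * j : ℕ) : ℝ) * sqCoeff k j * t ^ (k - 2 * j - 1) * F (k - j)) := by
  obtain ⟨d, rfl⟩ := Nat.exists_eq_add_of_le' h
  rw [show d + (2 * j + 2) + 1 = 2 * j + d + 3 by omega, sqCoeff_succ_succ,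
    show d + (2 * j + 2) = 2 * j + d + 2 by omega,
    show 2 * j + d + 3 - 2 * (j + 1) = d + 1 by omega,
    show 2 * j + d + 3 - (j + 1) = j + d + 2 by omega,
    show 2 * j + d + 2 - 2 * (j + 1) = d by omega,
    show 2 * j + d + 2 - (j + 1) + 1 = j + d + 2 by omega,
    show 2 * j + d + 2 - 2 * j = d + 2 by omega, show d + 2 - 1 = d + 1 by omega,
    show 2 * j + d + 2 - j = j + d + 2 by omega]
  push_cast
  ring

lemma sqSum_succ (k : ℕ) (t : ℝ) (F : ℕ → ℝ) :
    sqSum (k + 1) t F = t * sqSum k t (fun m => F (m + 1)) +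
      2 * ∑ j ∈ range (k / 2 + 1),
        ((k - 2 * j : ℕ) : ℝ) * sqCoeff k j * t ^ (k - 2 * j - 1) * F (k - j) := by
  set T : ℕ → ℝ := fun j => sqCoeff (k + 1) j * t ^ (k + 1 - 2 * j) * F (k + 1 - j)
  set P : ℕ → ℝ := fun j => sqCoeff k j * t ^ (k - 2 * j) * F (k - j + 1)
  set Q : ℕ → ℝ := fun j =>
    ((k - 2 * j : ℕ) : ℝ) * sqCoeff k j * t ^ (k - 2 * j - 1) * F (k - j)
  change ∑ j ∈ range ((k + 1) / 2 + 1), T j =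
    t * ∑ j ∈ range (k / 2 + 1), P j + 2 * ∑ j ∈ range (k / 2 + 1), Q j
  have hT0 : T 0 = t * P 0 := by
    simp only [T, P, sqCoeff_zero_right, mul_zero, Nat.sub_zero, pow_succ]
    ring
  have hmiddle : ∑ j ∈ range (k / 2), T (j + 1) =
      t * ∑ j ∈ range (k / 2), P (j + 1) + 2 * ∑ j ∈ range (k / 2), Q j := by
    rw [mul_sum, mul_sum, ← sum_add_distrib]
    exact sum_congr rfl fun j hj => sqTerm_succ_succ t F (by have := mem_range.mp hj; omega)
  rw [sum_range_succ' T, sum_range_succ' P, sum_range_succ Q]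
  rcases Nat.even_or_odd' k with ⟨n, rfl | rfl⟩
  · have hQ : Q n = 0 := by simp [Q]
    rw [show (2 * n + 1) / 2 = n by omega, show 2 * n / 2 = n by omega] at *
    rw [hmiddle, hT0, hQ]
    ring
  · have hT : T (n + 1) = 2 * Q n := by
      simp only [T, Q, show 2 * n + 1 + 1 = 2 * n + 2 by omega, sqCoeff_two_mul_add_two]
      rw [show 2 * n + 2 - 2 * (n + 1) = 0 by omega, show 2 * n + 1 - 2 * n = 1 by omega,
        show 2 * n + 2 - (n + 1) = 2 * n + 1 - n by omega]
      simp only [pow_zero, mul_one, Nat.cast_one, one_mul, tsub_self]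
      ring
    rw [show (2 * n + 1 + 1) / 2 = n + 1 by omega, show (2 * n + 1) / 2 = n by omega] at *
    rw [sum_range_succ, hmiddle, hT0, hT]
    ring

lemma hasDerivAt_sqSum (D : ℕ → ℝ → ℝ) (k : ℕ) (x : ℝ)
    (hD : ∀ m ≤ k, HasDerivAt (D m) (D (m + 1) (x ^ 2)) (x ^ 2)) :
    HasDerivAt (fun y => sqSum k (2 * y) (fun m => D m (y ^ 2)))
      (sqSum (k + 1) (2 * x) (fun m => D m (x ^ 2))) x := by
  rw [sqSum_succ, sqSum, mul_sum, mul_sum, ← sum_add_distrib]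
  refine HasDerivAt.fun_sum fun j _ => ?_
  have hsq : HasDerivAt (fun y => y ^ 2) (2 * x) x := by simpa using hasDerivAt_pow 2 x
  have hdouble : HasDerivAt (fun y => 2 * y) 2 x := by simpa using (hasDerivAt_id x).const_mul 2
  have hcomp : HasDerivAt (fun y => D (k - j) (y ^ 2)) (D (k - j + 1) (x ^ 2) * (2 * x)) x :=
    (hD (k - j) (Nat.sub_le k j)).comp (h := fun y => y ^ 2) x hsq
  refine (((hdouble.fun_pow (k - 2 * j)).const_mul (sqCoeff k j)).fun_mul hcomp).congr_deriv ?_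
  ring

theorem iteratedDeriv_comp_sq {f : ℝ → ℝ} {k : ℕ} (hf : ContDiff ℝ k f) :
    iteratedDeriv k (fun y => f (y ^ 2)) =
      fun x => sqSum k (2 * x) (fun m => iteratedDeriv m f (x ^ 2)) := by
  induction k with
  | zero => funext x; simp [sqSum, sqCoeff]
  | succ k ih =>
    funext x
    rw [iteratedDeriv_succ, ih (hf.of_le (by norm_cast; omega))]
    refine (hasDerivAt_sqSum _ k x fun m hm => ?_).deriv
    rw [iteratedDeriv_succ]
    exact (hf.differentiable_iteratedDeriv m (by norm_cast; omega) (x ^ 2)).hasDerivAt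

theorem statement_1 (k : ℕ) (f : ℝ → ℝ) (hf : ContDiff ℝ k f) (x : ℝ) :
    iteratedDeriv k (fun y => f (y ^ 2)) x =
      ∑ j ∈ Finset.range (k / 2 + 1),
        ((k.factorial : ℝ) / ((j.factorial : ℝ) * ((k - 2 * j).factorial : ℝ))) *
          (2 * x) ^ (k - 2 * j) * iteratedDeriv (k - j) f (x ^ 2) := by
  rw [iteratedDeriv_comp_sq hf]
  rfl
end

section
/- For every natural number k and every x ∈ ℝ, the Hermite polynomial identity holds: (−1)^k · e^{x²} · (d^k/dx^k e^{−x²}) = Σ_{j=0}^{⌊k/2⌋} (−1)^j · (k! / (j! · (k−2j)!)) · (2x)^{k−2j}, where d^k/dx^k denotes the k-th iterated derivative of the function x ↦ e^{−x²}. -/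
/-!
Mathlib's `hermite k` is the probabilists' polynomial `He_k`, attached to the Gaussian
`exp (-y ^ 2 / 2)`. Substituting `y = √2 x` turns it into `exp (-x ^ 2)`, so the left-hand side
equals `√2 ^ k * He_k (√2 x)`, and the explicit coefficients of `He_k` give the sum.
-/

open Polynomial Finset
open scoped Nat

theorem Finset.sum_range_succ_eq_sum_sub_two_mul {M : Type*} [AddCommMonoid M] (k : ℕ)
    (f : ℕ → M) (hf : ∀ i ≤ k, Odd (k + i) → f i = 0) :
    ∑ i ∈ range (k + 1), f i = ∑ j ∈ range (k / 2 + 1), f (k - 2 * j) := by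
  rw [← sum_image (g := (k - 2 * ·)) fun a ha b hb (hab : k - 2 * a = k - 2 * b) => by
    simp only [coe_range, Set.mem_Iio] at ha hb; omega]
  refine (sum_subset (fun i hi => ?_) fun i hi hi' => ?_).symm
  · simp only [mem_image, mem_range] at hi ⊢; omega
  · have hik : i ≤ k := Nat.lt_succ_iff.mp (mem_range.mp hi)
    refine hf i hik (Nat.not_even_iff_odd.mp fun ⟨r, hr⟩ => hi' ?_)
    simp only [mem_image, mem_range]
    exact ⟨(k - i) / 2, by omega, by omega⟩

theorem Nat.doubleFactorial_two_mul_sub_one_mul (j : ℕ) :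
    (2 * j - 1)‼ * (2 ^ j * j !) = (2 * j)! := by
  rcases j with _ | j
  · rfl
  · rw [← Nat.doubleFactorial_two_mul, show 2 * (j + 1) = 2 * j + 1 + 1 by ring,
      Nat.factorial_eq_mul_doubleFactorial, Nat.add_sub_cancel, mul_comm]

theorem Polynomial.aeval_hermite_eq_sum {K : Type*} [Field K] [CharZero K] (k : ℕ) (x : K) :
    aeval x (hermite k) = ∑ j ∈ range (k / 2 + 1),
      (-1) ^ j * ((k ! : K) / (j ! * (k - 2 * j)! * 2 ^ j)) * x ^ (k - 2 * j) := by
  rw [aeval_eq_sum_range, natDegree_hermite, sum_range_succ_eq_sum_sub_two_mul k _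
    fun i _ h => by rw [coeff_hermite_of_odd_add h, zero_smul]]
  refine sum_congr rfl fun j hj => ?_
  have hjk : 2 * j ≤ k := by have := mem_range.mp hj; omega
  have hfact : ((2 * j - 1)‼ * k.choose (2 * j) : K) * (j ! * (k - 2 * j)! * 2 ^ j) = k ! := by
    rw [← Nat.choose_mul_factorial_mul_factorial hjk, ← Nat.doubleFactorial_two_mul_sub_one_mul]
    push_cast; ring
  rw [coeff_hermite_of_even_add ⟨k - j, by omega⟩, show k - (k - 2 * j) = 2 * j by omega,
    Nat.mul_div_cancel_left _ two_pos, Nat.choose_symm hjk, zsmul_eq_mul, ← hfact,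
    mul_div_cancel_right₀ _ (by simp [Nat.factorial_ne_zero])]
  push_cast
  ring

theorem iteratedDeriv_exp_neg_sq (k : ℕ) (x : ℝ) :
    iteratedDeriv k (fun y => Real.exp (-y ^ 2)) x =
      (-1) ^ k * √2 ^ k * aeval (√2 * x) (hermite k) * Real.exp (-x ^ 2) := by
  have hrescale (y : ℝ) : Real.exp (-((√2 * y) ^ 2 / 2)) = Real.exp (-y ^ 2) := by
    rw [mul_pow, Real.sq_sqrt zero_le_two]; ring_nf
  have hgauss : ContDiff ℝ k fun y : ℝ => Real.exp (-(y ^ 2 / 2)) := by fun_prop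
  simp_rw [← hrescale]
  rw [iteratedDeriv_comp_const_mul hgauss, iteratedDeriv_eq_iterate]
  beta_reduce
  rw [deriv_gaussian_eq_hermite_mul_gaussian]
  ring

theorem statement_2 (k : ℕ) (x : ℝ) :
    (-1 : ℝ) ^ k * Real.exp (x ^ 2) *
        iteratedDeriv k (fun y => Real.exp (-y ^ 2)) x =
      ∑ j ∈ Finset.range (k / 2 + 1),
        (-1 : ℝ) ^ j * ((k.factorial : ℝ) / ((j.factorial : ℝ) * ((k - 2 * j).factorial : ℝ))) *
          (2 * x) ^ (k - 2 * j) := by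
  have hsign : ((-1 : ℝ) ^ k) ^ 2 = 1 := by rw [← pow_mul, pow_mul', neg_one_sq, one_pow]
  have hexp : Real.exp (x ^ 2) * Real.exp (-x ^ 2) = 1 := by rw [← Real.exp_add]; simp
  calc (-1 : ℝ) ^ k * Real.exp (x ^ 2) * iteratedDeriv k (fun y => Real.exp (-y ^ 2)) x
      = √2 ^ k * aeval (√2 * x) (hermite k) := by
        rw [iteratedDeriv_exp_neg_sq]
        linear_combination (√2 ^ k * aeval (√2 * x) (hermite k)) * (((-1) ^ k) ^ 2 * hexp + hsign)
    _ = _ := by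
      rw [aeval_hermite_eq_sum, mul_sum]
      refine sum_congr rfl fun j hj => ?_
      have hpow : √2 ^ k * √2 ^ (k - 2 * j) = 2 ^ j * 2 ^ (k - 2 * j) := by
        rw [← pow_add, ← pow_add, show k + (k - 2 * j) = 2 * (j + (k - 2 * j)) by
          have := mem_range.mp hj; omega, pow_mul, Real.sq_sqrt zero_le_two]
      calc _ = (-1) ^ j * ((k ! : ℝ) / (j ! * (k - 2 * j)!)) / 2 ^ j *
            (√2 ^ k * √2 ^ (k - 2 * j)) * x ^ (k - 2 * j) := by ring
        _ = _ := by rw [hpow, mul_pow]; field_simp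
end

section
/- For every natural number n and every x ∈ ℝ, 2^n · (cos x)^n · cos(n x) = Σ_{k=0}^{n} C(n,k) · cos(2 k x), where C(n,k) is the binomial coefficient. -/
open Complex in
theorem statement_3 (n : ℕ) (x : ℝ) :
    2 ^ n * (Real.cos x) ^ n * Real.cos (n * x) =
      ∑ k ∈ Finset.range (n + 1), (n.choose k : ℝ) * Real.cos (2 * k * x) := by
  have key : ((2 * Complex.cos x) ^ n * Complex.exp ((n : ℂ) * x * I) : ℂ)
      = ∑ k ∈ Finset.range (n + 1), (n.choose k : ℂ) * Complex.exp (2 * k * x * I) := by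
    have h2 : (2 : ℂ) * Complex.cos x
        = Complex.exp ((x : ℂ) * I) + Complex.exp (-((x : ℂ) * I)) := by
      rw [Complex.cos]; ring
    have h3 : Complex.exp ((n : ℂ) * x * I) = Complex.exp ((x : ℂ) * I) ^ n := by
      rw [← Complex.exp_nat_mul]; ring_nf
    rw [h2, h3, ← mul_pow]
    have h4 : (Complex.exp ((x : ℂ) * I) + Complex.exp (-((x : ℂ) * I)))
        * Complex.exp ((x : ℂ) * I) = Complex.exp (2 * x * I) + 1 := by
      rw [add_mul, ← Complex.exp_add, ← Complex.exp_add]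
      ring_nf
      simp [Complex.exp_zero, add_comm]
    rw [h4, add_pow]
    refine Finset.sum_congr rfl fun k hk => ?_
    rw [one_pow, ← Complex.exp_nat_mul]
    ring_nf
  have := congrArg Complex.re key
  have hL : (((2 * Complex.cos x) ^ n * Complex.exp ((n : ℂ) * x * I)).re : ℝ)
      = 2 ^ n * (Real.cos x) ^ n * Real.cos (n * x) := by
    have : (2 * Complex.cos x) ^ n = ((2 ^ n * (Real.cos x) ^ n : ℝ) : ℂ) := by
      push_cast [← Complex.ofReal_cos]; ring
    rw [this, Complex.re_ofReal_mul]
    have : ((n : ℂ) * x * I) = ((n * x : ℝ) : ℂ) * I := by push_cast; ring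
    rw [this, Complex.exp_ofReal_mul_I_re]
  rw [hL] at this
  rw [this]
  rw [Complex.re_sum]
  refine Finset.sum_congr rfl fun k hk => ?_
  have : ((n.choose k : ℂ)) = ((n.choose k : ℝ) : ℂ) := by push_cast; rfl
  rw [this, Complex.re_ofReal_mul]
  have : ((2 : ℂ) * k * x * I) = ((2 * k * x : ℝ) : ℂ) * I := by push_cast; ring
  rw [this, Complex.exp_ofReal_mul_I_re]
end

section
/- For every natural number n and every x ∈ ℝ, 2^n · (cos x)^n · sin(n x) = Σ_{k=0}^{n} C(n,k) · sin(2 k x), where C(n,k) is the binomial coefficient. -/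
open Complex in
theorem statement_4 (n : ℕ) (x : ℝ) :
    2 ^ n * (Real.cos x) ^ n * Real.sin (n * x) =
      ∑ k ∈ Finset.range (n + 1), (n.choose k : ℝ) * Real.sin (2 * k * x) := by
  have key : (Complex.exp (x * I) + Complex.exp (-(x * I))) ^ n
      * Complex.exp (n * x * I)
      = ∑ k ∈ Finset.range (n + 1), (n.choose k : ℂ) * Complex.exp (2 * k * x * I) := by
    rw [add_pow, Finset.sum_mul]
    refine Finset.sum_congr rfl fun k hk => ?_
    have hkn : k ≤ n := Nat.le_of_lt_succ (Finset.mem_range.mp hk)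
    rw [← Complex.exp_nat_mul, ← Complex.exp_nat_mul, ← Complex.exp_add, mul_right_comm,
      ← Complex.exp_add, Nat.cast_sub hkn]
    have : (k : ℂ) * (x * I) + ((n : ℂ) - k) * -(x * I) + n * x * I = 2 * k * x * I := by
      ring
    rw [this, mul_comm]
  have h2 : Complex.exp (x * I) + Complex.exp (-(x * I)) = 2 * Real.cos x := by
    rw [Complex.ofReal_cos, Complex.two_cos, neg_mul]
  rw [h2] at key
  have hr : ∀ (r s : ℝ), ((r : ℂ) * Complex.exp (s * I)).im = r * Real.sin s := by
    intro r s
    simp [Complex.exp_mul_I, Complex.mul_im, ← Complex.ofReal_cos, ← Complex.ofReal_sin]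
  have := congrArg Complex.im key
  rw [Complex.im_sum] at this
  have lhs : ((2 * (Real.cos x : ℂ)) ^ n * Complex.exp (n * x * I)).im
      = 2 ^ n * (Real.cos x) ^ n * Real.sin (n * x) := by
    rw [show ((2:ℂ) * (Real.cos x : ℂ)) ^ n * Complex.exp (n * x * I)
        = ((2 * Real.cos x : ℝ) : ℂ) ^ n * Complex.exp (((n * x : ℝ) : ℂ) * I) by push_cast; ring,
      ← Complex.ofReal_pow, hr]
    ring
  rw [lhs] at this
  rw [this]
  refine Finset.sum_congr rfl fun k _ => ?_
  rw [show ((n.choose k : ℂ)) * Complex.exp (2 * k * x * I)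
      = ((n.choose k : ℝ) : ℂ) * Complex.exp (((2 * k * x : ℝ) : ℂ) * I) by push_cast; ring, hr]
end

section
/- For every natural number n, ∫_0^{π/2} (cos x)^n · cos(n x) dx = π / 2^{n+1}. -/
/-!
Writing `cos x · cos((n+1)x) = (cos(nx) + cos((n+2)x)) / 2` splits the `(n+1)`-st integral into
half the `n`-th one plus `∫ cos^n x · cos((n+2)x)`, and the latter vanishes because
`cos^(n+1) x · sin((n+1)x) / (n+1)` is an antiderivative that is zero at both `0` and `π/2`.
-/

open Real intervalIntegral

lemma two_mul_cos_mul_cos_add_one (m x : ℝ) :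
    2 * (cos x * cos ((m + 1) * x)) = cos (m * x) + cos ((m + 2) * x) := by
  rw [show m * x = (m + 1) * x - x by ring, show (m + 2) * x = (m + 1) * x + x by ring,
    cos_sub, cos_add]
  ring

lemma hasDerivAt_cos_pow_succ_mul_sin_div (n : ℕ) (x : ℝ) :
    HasDerivAt (fun y => cos y ^ (n + 1) * sin ((n + 1) * y) / (n + 1))
      (cos x ^ n * cos ((n + 2) * x)) x := by
  have hpow : HasDerivAt (fun y => cos y ^ (n + 1)) ((n + 1) * cos x ^ n * -sin x) x := by
    simpa using (hasDerivAt_cos x).fun_pow (n + 1)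
  have hsin : HasDerivAt (fun y => sin ((n + 1) * y)) (cos ((n + 1) * x) * (n + 1)) x := by
    simpa using ((hasDerivAt_id x).const_mul ((n : ℝ) + 1)).sin
  refine ((hpow.fun_mul hsin).div_const _).congr_deriv ?_
  rw [show ((n : ℝ) + 2) * x = (n + 1) * x + x by ring, cos_add]
  field_simp
  ring

lemma integral_cos_pow_mul_cos_add_two (n : ℕ) :
    ∫ x in (0 : ℝ)..(π / 2), cos x ^ n * cos ((n + 2) * x) = 0 := by
  rw [integral_eq_sub_of_hasDerivAt (fun x _ => hasDerivAt_cos_pow_succ_mul_sin_div n x)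
    (by apply Continuous.intervalIntegrable; fun_prop)]
  simp

open Real in
theorem statement_5 (n : ℕ) :
    ∫ x in (0 : ℝ)..(π / 2), (Real.cos x) ^ n * Real.cos (n * x) = π / 2 ^ (n + 1) := by
  induction n with
  | zero => simp
  | succ n ih =>
    have split : ∀ x : ℝ, cos x ^ (n + 1) * cos (↑(n + 1) * x)
        = (cos x ^ n * cos (n * x) + cos x ^ n * cos ((n + 2) * x)) / 2 := fun x => by
      rw [← mul_add, ← two_mul_cos_mul_cos_add_one, Nat.cast_succ]
      ring
    have hint (m : ℝ) :
        IntervalIntegrable (fun x => cos x ^ n * cos (m * x)) MeasureTheory.volume 0 (π / 2) := by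
      apply Continuous.intervalIntegrable; fun_prop
    simp only [split]
    rw [integral_div, integral_add (hint _) (hint _), ih, integral_cos_pow_mul_cos_add_two,
      pow_succ]
    ring
end

section
/- For every natural number n, ∫_0^{π/2} (cos x)^n · sin(n x) dx = (1 / 2^{n+1}) · Σ_{k=1}^{n} 2^k / k. -/
/-!
Write `I n = ∫₀^{π/2} cosⁿ x · sin (n x) dx`. The product formula
`2 cos x · sin ((n+1) x) = sin (n x) + sin ((n+2) x)` gives `2 I (n+1) = I n + J n` with
`J n = ∫₀^{π/2} cosⁿ x · sin ((n+2) x) dx`, and `J n = 1 / (n+1)` because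
`-cosⁿ⁺¹ x · cos ((n+1) x) / (n+1)` is an antiderivative of its integrand. Hence
`2ⁿ⁺² I (n+1) = 2ⁿ⁺¹ I n + 2ⁿ⁺¹ / (n+1)`, which telescopes to the sum.
-/

open Real

theorem hasDerivAt_cos_pow_succ_mul_cos (n : ℕ) (x : ℝ) :
    HasDerivAt (fun x => cos x ^ (n + 1) * cos ((n + 1) * x))
      (-((n + 1) * (cos x ^ n * sin ((n + 2) * x)))) x := by
  have hpow : HasDerivAt (fun x => cos x ^ (n + 1)) ((n + 1 : ℕ) * cos x ^ n * -sin x) x := by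
    simpa using (hasDerivAt_cos x).fun_pow (n + 1)
  have hcos : HasDerivAt (fun x : ℝ => cos ((n + 1) * x)) (-sin ((n + 1) * x) * (n + 1)) x := by
    simpa [Function.comp_def] using
      (hasDerivAt_cos _).comp x ((hasDerivAt_id x).const_mul ((n : ℝ) + 1))
  refine (hpow.mul hcos).congr_deriv ?_
  rw [show ((n : ℝ) + 2) * x = (n + 1) * x + x by ring, sin_add]
  push_cast
  ring

theorem integral_cos_pow_mul_sin_add_two_mul (n : ℕ) :
    ∫ x in (0 : ℝ)..(π / 2), cos x ^ n * sin ((n + 2) * x) = 1 / (n + 1) := by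
  have hderiv : ∀ x ∈ Set.uIcc 0 (π / 2), HasDerivAt
      (fun x => -(cos x ^ (n + 1) * cos ((n + 1) * x)) / (n + 1))
      (cos x ^ n * sin ((n + 2) * x)) x := fun x _ => by
    refine ((hasDerivAt_cos_pow_succ_mul_cos n x).neg.div_const ((n : ℝ) + 1)).congr_deriv ?_
    field_simp
  rw [intervalIntegral.integral_eq_sub_of_hasDerivAt hderiv
    (Continuous.intervalIntegrable (by fun_prop) _ _)]
  simp [neg_div]

theorem cos_pow_succ_mul_sin_succ_mul (n : ℕ) (x : ℝ) :
    cos x ^ (n + 1) * sin ((n + 1) * x) =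
      (cos x ^ n * sin (n * x) + cos x ^ n * sin ((n + 2) * x)) / 2 := by
  have h := two_mul_sin_mul_cos ((n + 1) * x) x
  rw [show ((n : ℝ) + 1) * x - x = n * x by ring,
    show ((n : ℝ) + 1) * x + x = (n + 2) * x by ring] at h
  linear_combination cos x ^ n * h / 2

theorem integral_cos_pow_succ_mul_sin_succ_mul (n : ℕ) :
    ∫ x in (0 : ℝ)..(π / 2), cos x ^ (n + 1) * sin ((n + 1 : ℕ) * x) =
      ((∫ x in (0 : ℝ)..(π / 2), cos x ^ n * sin (n * x)) + 1 / (n + 1)) / 2 := by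
  push_cast
  simp only [cos_pow_succ_mul_sin_succ_mul]
  rw [intervalIntegral.integral_div, intervalIntegral.integral_add
    (Continuous.intervalIntegrable (by fun_prop) _ _)
    (Continuous.intervalIntegrable (by fun_prop) _ _),
    integral_cos_pow_mul_sin_add_two_mul]

open Real in
theorem statement_6 (n : ℕ) :
    ∫ x in (0 : ℝ)..(π / 2), (Real.cos x) ^ n * Real.sin (n * x) =
      (1 / 2 ^ (n + 1)) * ∑ k ∈ Finset.Icc 1 n, (2 : ℝ) ^ k / k := by
  induction n with
  | zero => simp
  | succ n ih =>
    rw [integral_cos_pow_succ_mul_sin_succ_mul, ih, Finset.sum_Icc_succ_top (by omega)]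
    push_cast
    field_simp
    ring
end

section
/- For every natural number n and every natural number k ≥ 1, (2/π) · ∫_0^{π/2} cos(2 k x) · (cos x)^n · cos(n x) dx = C(n,k) · (1/2)^{n+1}, where C(n,k) is the binomial coefficient (equal to 0 when k > n). -/
open Real

lemma int_cos_mul (c : ℝ) (hc : c ≠ 0) :
    ∫ x in (0:ℝ)..(π/2), Real.cos (c * x) = Real.sin (c * (π/2)) / c := by
  have : ∀ x ∈ Set.uIcc (0:ℝ) (π/2), HasDerivAt (fun y => Real.sin (c*y) / c) (Real.cos (c*x)) x := by
    intro x _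
    have h := ((Real.hasDerivAt_sin (c*x)).comp x ((hasDerivAt_id x).const_mul c)).div_const c
    simpa [mul_comm, mul_div_assoc, mul_div_cancel_left₀ _ hc] using h
  rw [intervalIntegral.integral_eq_sub_of_hasDerivAt this
    ((Real.continuous_cos.comp (continuous_const.mul continuous_id)).intervalIntegrable _ _)]
  simp

lemma pascal_sum (n : ℕ) (f : ℕ → ℝ) :
    ∑ j ∈ Finset.range (n+2), ((n+1).choose j : ℝ) * f j
    = ∑ j ∈ Finset.range (n+1), (n.choose j : ℝ) * f j
      + ∑ j ∈ Finset.range (n+1), (n.choose j : ℝ) * f (j+1) := by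
  have h0 : ∑ j ∈ Finset.range (n+1), ((n.choose (j+1) : ℝ)) * f (j+1)
      = ∑ j ∈ Finset.range n, ((n.choose (j+1) : ℝ)) * f (j+1) := by
    rw [Finset.sum_range_succ, Nat.choose_succ_self]; simp
  rw [Finset.sum_range_succ' (fun j => ((n+1).choose j : ℝ) * f j) (n+1),
      Finset.sum_range_succ' (fun j => ((n).choose j : ℝ) * f j) n]
  simp only [Nat.choose_succ_succ, Nat.choose_zero_right, Nat.cast_add, Nat.cast_one, add_mul]
  rw [Finset.sum_add_distrib, h0]
  ring

lemma key (n : ℕ) (x : ℝ) :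
    Real.cos x ^ n * Real.cos (n*x)
      = (1/2:ℝ)^n * ∑ j ∈ Finset.range (n+1), (n.choose j : ℝ) * Real.cos (2*j*x) ∧
    Real.cos x ^ n * Real.sin (n*x)
      = (1/2:ℝ)^n * ∑ j ∈ Finset.range (n+1), (n.choose j : ℝ) * Real.sin (2*j*x) := by
  induction n with
  | zero => simp
  | succ n ih =>
    obtain ⟨hA, hB⟩ := ih
    have hcast : ((n+1 : ℕ) : ℝ) * x = n*x + x := by push_cast; ring
    have h1 : Real.cos x ^ 2 = 1/2 + Real.cos (2*x)/2 := Real.cos_sq x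
    have h2 : Real.sin x * Real.cos x = Real.sin (2*x)/2 := by
      rw [Real.sin_two_mul]; ring
    have hsumA : Real.cos (2*x) * (∑ j ∈ Finset.range (n+1), (n.choose j : ℝ) * Real.cos (2*j*x))
        - Real.sin (2*x) * (∑ j ∈ Finset.range (n+1), (n.choose j : ℝ) * Real.sin (2*j*x))
        = ∑ j ∈ Finset.range (n+1), (n.choose j : ℝ) * Real.cos (2*(j+1:ℕ)*x) := by
      rw [Finset.mul_sum, Finset.mul_sum, ← Finset.sum_sub_distrib]
      refine Finset.sum_congr rfl fun j _ => ?_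
      have : 2*((j:ℝ)+1)*x = 2*j*x + 2*x := by ring
      push_cast
      rw [this, Real.cos_add]
      ring
    have hsumB : Real.cos (2*x) * (∑ j ∈ Finset.range (n+1), (n.choose j : ℝ) * Real.sin (2*j*x))
        + Real.sin (2*x) * (∑ j ∈ Finset.range (n+1), (n.choose j : ℝ) * Real.cos (2*j*x))
        = ∑ j ∈ Finset.range (n+1), (n.choose j : ℝ) * Real.sin (2*(j+1:ℕ)*x) := by
      rw [Finset.mul_sum, Finset.mul_sum, ← Finset.sum_add_distrib]
      refine Finset.sum_congr rfl fun j _ => ?_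
      have : 2*((j:ℝ)+1)*x = 2*j*x + 2*x := by ring
      push_cast
      rw [this, Real.sin_add]
      ring
    constructor
    · have lhs_eq : Real.cos x ^ (n+1) * Real.cos ((n+1 : ℕ)*x)
        = (1/2 + Real.cos (2*x)/2) * (Real.cos x ^ n * Real.cos (n*x))
          - (Real.sin (2*x)/2) * (Real.cos x ^ n * Real.sin (n*x)) := by
        rw [hcast, Real.cos_add, pow_succ]
        linear_combination (Real.cos x ^ n * Real.cos (n*x)) * h1
          - Real.cos x ^ n * Real.sin (n*x) * h2
      rw [lhs_eq, hA, hB, pascal_sum n (fun j => Real.cos (2*j*x))]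
      linear_combination ((1/2:ℝ)^n/2) * hsumA
    · have lhs_eq : Real.cos x ^ (n+1) * Real.sin ((n+1 : ℕ)*x)
        = (1/2 + Real.cos (2*x)/2) * (Real.cos x ^ n * Real.sin (n*x))
          + (Real.sin (2*x)/2) * (Real.cos x ^ n * Real.cos (n*x)) := by
        rw [hcast, Real.sin_add, pow_succ]
        linear_combination (Real.cos x ^ n * Real.sin (n*x)) * h1
          + Real.cos x ^ n * Real.cos (n*x) * h2
      rw [lhs_eq, hA, hB, pascal_sum n (fun j => Real.sin (2*j*x))]
      linear_combination ((1/2:ℝ)^n/2) * hsumB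

lemma ortho (k j : ℕ) (hk : 1 ≤ k) :
    ∫ x in (0:ℝ)..(π/2), Real.cos (2*k*x) * Real.cos (2*j*x)
    = if j = k then π/4 else 0 := by
  rcases eq_or_ne j k with h | h
  · subst h
    simp only [if_pos rfl]
    have hc : (4*(j:ℝ)) ≠ 0 := by positivity
    have hpt : ∀ x : ℝ, Real.cos (2*j*x) * Real.cos (2*j*x)
        = 1/2 + Real.cos ((4*j)*x) * (1/2) := by
      intro x
      have := Real.cos_sq (2*j*x)
      have h4 : 2*(2*(j:ℝ)*x) = (4*j)*x := by ring
      rw [h4] at this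
      nlinarith [this]
    simp only [hpt]
    rw [intervalIntegral.integral_add (intervalIntegrable_const)
      ((Continuous.intervalIntegrable (by continuity :
        Continuous fun x : ℝ => Real.cos ((4*(j:ℝ))*x) * (1/2))) _ _),
      intervalIntegral.integral_mul_const, int_cos_mul _ hc]
    have : (4*(j:ℝ)) * (π/2) = ((2*j : ℤ) : ℝ) * π := by push_cast; ring
    rw [this, Real.sin_int_mul_pi]
    simp
    ring
  · simp only [if_neg h]
    have hjk : (j:ℝ) ≠ (k:ℝ) := by exact_mod_cast h
    have c1 : (2*(k:ℝ) - 2*j) ≠ 0 := by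
      intro hc; apply hjk; linarith [hc]
    have c2 : (2*(k:ℝ) + 2*j) ≠ 0 := by positivity
    have hpt : ∀ x : ℝ, Real.cos (2*k*x) * Real.cos (2*j*x)
        = Real.cos ((2*(k:ℝ)-2*j)*x) * (1/2) + Real.cos ((2*(k:ℝ)+2*j)*x) * (1/2) := by
      intro x
      rw [show (2*(k:ℝ)-2*j)*x = 2*k*x - 2*j*x by ring,
          show (2*(k:ℝ)+2*j)*x = 2*k*x + 2*j*x by ring,
          Real.cos_sub, Real.cos_add]
      ring
    simp only [hpt]
    rw [intervalIntegral.integral_add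
      ((Continuous.intervalIntegrable (by continuity :
        Continuous fun x : ℝ => Real.cos ((2*(k:ℝ)-2*(j:ℝ))*x) * (1/2))) _ _)
      ((Continuous.intervalIntegrable (by continuity :
        Continuous fun x : ℝ => Real.cos ((2*(k:ℝ)+2*(j:ℝ))*x) * (1/2))) _ _),
      intervalIntegral.integral_mul_const, intervalIntegral.integral_mul_const,
      int_cos_mul _ c1, int_cos_mul _ c2]
    have e1 : (2*(k:ℝ) - 2*j) * (π/2) = (((k:ℤ) - j : ℤ) : ℝ) * π := by push_cast; ring
    have e2 : (2*(k:ℝ) + 2*j) * (π/2) = (((k:ℤ) + j : ℤ) : ℝ) * π := by push_cast; ring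
    rw [e1, e2, Real.sin_int_mul_pi, Real.sin_int_mul_pi]
    simp

open Real in
theorem statement_7 (n k : ℕ) (hk : 1 ≤ k) :
    (2 / π) * ∫ x in (0 : ℝ)..(π / 2),
        Real.cos (2 * k * x) * (Real.cos x) ^ n * Real.cos (n * x) =
      (n.choose k : ℝ) * (1 / 2) ^ (n + 1) := by
  have hpt : ∀ x : ℝ, Real.cos (2*k*x) * (Real.cos x)^n * Real.cos (n*x)
      = (1/2:ℝ)^n * ∑ j ∈ Finset.range (n+1),
          (n.choose j : ℝ) * (Real.cos (2*k*x) * Real.cos (2*j*x)) := by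
    intro x
    have h := (key n x).1
    rw [mul_assoc, h]
    simp only [Finset.mul_sum]
    exact Finset.sum_congr rfl fun j _ => by ring
  simp only [hpt]
  rw [intervalIntegral.integral_const_mul,
      intervalIntegral.integral_finset_sum (fun j _ =>
        (Continuous.intervalIntegrable (by continuity :
          Continuous fun x : ℝ => (n.choose j : ℝ) * (Real.cos (2*(k:ℝ)*x) * Real.cos (2*(j:ℝ)*x)))) _ _)]
  have : ∀ j ∈ Finset.range (n+1),
      ∫ x in (0:ℝ)..(π/2), (n.choose j : ℝ) * (Real.cos (2*k*x) * Real.cos (2*j*x))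
      = (n.choose j : ℝ) * (if j = k then π/4 else 0) := by
    intro j _
    rw [intervalIntegral.integral_const_mul, ortho k j hk]
  rw [Finset.sum_congr rfl this]
  simp only [mul_ite, mul_zero, Finset.sum_ite_eq', Finset.mem_range]
  by_cases hkn : k < n + 1
  · rw [if_pos hkn]
    field_simp
    ring
  · rw [if_neg hkn]
    rw [Nat.choose_eq_zero_of_lt (by omega)]
    simp
end

section
/- For every natural number n and every natural number k ≥ 1, (2/π) · ∫_0^{π/2} sin(2 k x) · (cos x)^n · sin(n x) dx = C(n,k) · (1/2)^{n+1}, where C(n,k) is the binomial coefficient (equal to 0 when k > n). -/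
/-!
Since `e^{2ix} + 1 = 2 cos x · e^{ix}`, the imaginary part of the binomial expansion of
`(e^{2ix} + 1)^n` gives `2^n cos^n x sin(nx) = ∑ⱼ C(n,j) sin(2jx)`. The functions `sin(2jx)`,
`j ≥ 1`, are orthogonal on `[0, π/2]` with squared norm `π/4`, so integrating against
`sin(2kx)` extracts `C(n,k) π / 2^(n+2)`.
-/

open Real Finset

theorem two_pow_mul_cos_pow_mul_sin_nat_mul (n : ℕ) (x : ℝ) :
    2 ^ n * cos x ^ n * sin (n * x) = ∑ j ∈ range (n + 1), n.choose j * sin (2 * j * x) := by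
  have hfactor : Complex.exp (2 * x * Complex.I) + 1 =
      2 * Real.cos x * Complex.exp (x * Complex.I) := by
    rw [Complex.ofReal_cos, Complex.two_cos, add_mul, ← Complex.exp_add, ← Complex.exp_add]
    ring_nf; simp [add_comm]
  have hbinom := congrArg Complex.im (add_pow (Complex.exp (2 * x * Complex.I)) 1 n)
  rw [hfactor, mul_pow, ← Complex.exp_nat_mul, Complex.im_sum] at hbinom
  simp_rw [← Complex.exp_nat_mul, one_pow, mul_one, ← mul_assoc] at hbinom
  norm_cast at hbinom
  simp only [Complex.mul_im, Complex.ofReal_re, Complex.ofReal_im, Complex.natCast_re,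
    Complex.natCast_im, Complex.exp_ofReal_mul_I_im, mul_zero, zero_mul, add_zero,
    zero_add] at hbinom
  rw [← mul_pow, hbinom]
  exact sum_congr rfl fun j _ => by push_cast; rw [mul_comm, mul_comm (j : ℝ)]

theorem integral_cos_two_int_mul (m : ℤ) :
    ∫ x in (0 : ℝ)..(π / 2), cos (2 * m * x) = if m = 0 then π / 2 else 0 := by
  split_ifs with hm
  · simp [hm]
  · have h2m : (2 * m : ℝ) ≠ 0 := by exact_mod_cast mul_ne_zero two_ne_zero hm
    rw [intervalIntegral.integral_comp_mul_left cos h2m, integral_cos,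
      show 2 * m * (π / 2) = (m : ℝ) * π by ring, sin_int_mul_pi]
    simp

theorem integral_sin_two_nat_mul_mul_sin_two_nat_mul (j k : ℕ) (hk : k ≠ 0) :
    ∫ x in (0 : ℝ)..(π / 2), sin (2 * k * x) * sin (2 * j * x) = if j = k then π / 4 else 0 := by
  have hprod (x : ℝ) : sin (2 * k * x) * sin (2 * j * x) =
      (cos (2 * ((k - j : ℤ) : ℝ) * x) - cos (2 * ((k + j : ℤ) : ℝ) * x)) / 2 := by
    rw [eq_div_iff two_ne_zero, mul_comm, ← mul_assoc, two_mul_sin_mul_sin]; push_cast; ring_nf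
  have hsum : (k + j : ℤ) ≠ 0 := by omega
  simp_rw [hprod]
  rw [intervalIntegral.integral_div, intervalIntegral.integral_sub
    (by apply Continuous.intervalIntegrable; fun_prop)
    (by apply Continuous.intervalIntegrable; fun_prop),
    integral_cos_two_int_mul, integral_cos_two_int_mul, if_neg hsum]
  by_cases hjk : j = k
  · simp [hjk]; ring
  · simp [hjk, show (k : ℤ) - j ≠ 0 by omega]

open Real in
theorem statement_8 (n k : ℕ) (hk : 1 ≤ k) :
    (2 / π) * ∫ x in (0 : ℝ)..(π / 2),
        Real.sin (2 * k * x) * (Real.cos x) ^ n * Real.sin (n * x) =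
      (n.choose k : ℝ) * (1 / 2) ^ (n + 1) := by
  have hexpand (x : ℝ) : sin (2 * k * x) * cos x ^ n * sin (n * x) =
      ∑ j ∈ range (n + 1), n.choose j / 2 ^ n * (sin (2 * k * x) * sin (2 * j * x)) := by
    calc sin (2 * k * x) * cos x ^ n * sin (n * x)
        = sin (2 * k * x) * (2 ^ n * cos x ^ n * sin (n * x)) / 2 ^ n := by field_simp
      _ = _ := by
        rw [two_pow_mul_cos_pow_mul_sin_nat_mul, mul_sum, sum_div]
        exact sum_congr rfl fun j _ => by ring
  simp_rw [hexpand]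
  rw [intervalIntegral.integral_finsetSum fun j _ => by
    apply Continuous.intervalIntegrable; fun_prop]
  simp_rw [intervalIntegral.integral_const_mul,
    integral_sin_two_nat_mul_mul_sin_two_nat_mul _ _ (Nat.one_le_iff_ne_zero.mp hk),
    mul_ite, mul_zero]
  rw [sum_ite_eq']
  rcases le_or_gt k n with hkn | hkn
  · rw [if_pos (mem_range_succ_iff.mpr hkn), one_div, inv_pow]
    field_simp
    ring
  · rw [if_neg (by simpa using hkn), Nat.choose_eq_zero_of_lt hkn]
    simp
end

section
/- Let f : ℂ → ℂ be entire (complex differentiable on all of ℂ) and map real numbers to real numbers. Then (2/π) · ∫_0^{π/2} Re[ f( (cos x) · e^{i x} ) ] dx = Re[ f(1/2) ] (and f(1/2) is real, so the right-hand side equals the real value f(1/2)). -/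
/-!
Since `cos x · e^{ix} = (1 + e^{2ix})/2`, the substitution `θ = 2x` turns the left-hand side into
the average of `Re f` over the upper half of the circle `|z - 1/2| = 1/2`. By Schwarz reflection
`f (conj z) = conj (f z)`, so `Re f` takes the same values on both halves of this circle, which is
symmetric about the real axis; hence this is the average over the whole circle, which equals
`Re f (1/2)` by the mean value property.
-/

open Real Complex Filter Topology ComplexConjugate MeasureTheory

theorem Differentiable.apply_conj_of_im_eq_zero {f : ℂ → ℂ} (hf : Differentiable ℂ f)
    (hreal : ∀ x : ℝ, (f x).im = 0) (z : ℂ) : f (conj z) = conj (f z) := by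
  have hreflect : Differentiable ℂ (conj ∘ f ∘ conj) := fun z =>
    differentiableAt_conj_conj_iff.mpr (hf _)
  have hreal_points : ∃ᶠ w in 𝓝[≠] (0 : ℂ), f w = (conj ∘ f ∘ conj) w := by
    have hmaps : Tendsto ((↑) : ℝ → ℂ) (𝓝[≠] 0) (𝓝[≠] 0) :=
      continuous_ofReal.continuousWithinAt.tendsto_nhdsWithin fun x hx => by simpa using hx
    refine hmaps.frequently (Eventually.frequently (Eventually.of_forall fun x => ?_))
    simp [conj_eq_iff_im.mpr (hreal x)]
  have := AnalyticOnNhd.eq_of_frequently_eq (fun z _ => hf.analyticAt z)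
    (fun z _ => hreflect.analyticAt z) hreal_points
  simpa using congrFun this (conj z)

theorem Function.Periodic.intervalIntegral_two_mul_eq_two_smul_of_even {E : Type*}
    [NormedAddCommGroup E] [NormedSpace ℝ E] {g : ℝ → E} {T : ℝ} (hper : Periodic g (2 * T))
    (heven : ∀ x, g (-x) = g x) (hint : IntervalIntegrable g volume 0 T) :
    ∫ x in 0..2 * T, g x = (2 : ℝ) • ∫ x in 0..T, g x := by
  have hreflect : (fun x => g (2 * T - x)) = g := funext fun x => by
    rw [sub_eq_neg_add, hper, heven]
  have hint' : IntervalIntegrable g volume T (2 * T) := by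
    have := (hint.comp_sub_left (2 * T)).symm
    rwa [hreflect, sub_zero, show 2 * T - T = T by ring] at this
  have hsecond : ∫ x in T..2 * T, g x = ∫ x in 0..T, g x := by
    have := intervalIntegral.integral_comp_sub_left g (2 * T) (a := T) (b := 2 * T)
    rwa [hreflect, sub_self, show 2 * T - T = T by ring] at this
  rw [← intervalIntegral.integral_add_adjacent_intervals hint hint', hsecond, two_smul]

theorem Real.circleAverage_eq_inv_pi_smul_integral_of_conj_invariant {E : Type*}
    [NormedAddCommGroup E] [NormedSpace ℝ E] {G : ℂ → E} {c : ℂ} {R : ℝ}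
    (hG : ∀ z, G (conj z) = G z) (hc : conj c = c)
    (hint : IntervalIntegrable (fun θ => G (circleMap c R θ)) volume 0 π) :
    circleAverage G c R = π⁻¹ • ∫ θ in 0..π, G (circleMap c R θ) := by
  have heven : ∀ θ, G (circleMap c R (-θ)) = G (circleMap c R θ) := fun θ => by
    rw [← hc, ← conj_circleMap, hG, hc]
  have hper : Function.Periodic (fun θ => G (circleMap c R θ)) (2 * π) :=
    (periodic_circleMap c R).comp G
  rw [circleAverage_def, hper.intervalIntegral_two_mul_eq_two_smul_of_even heven hint, smul_smul]
  congr 1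
  field_simp

theorem Complex.ofReal_cos_mul_exp_I_mul (x : ℝ) :
    (Real.cos x : ℂ) * exp (I * x) = circleMap (1 / 2) (1 / 2) (2 * x) := by
  rw [circleMap, ofReal_cos, Complex.cos, div_mul_eq_mul_div, add_mul, ← exp_add, ← exp_add]
  push_cast
  ring_nf
  rw [exp_zero]
  ring

theorem Differentiable.circleAverage_re {f : ℂ → ℂ} (hf : Differentiable ℂ f) (c : ℂ) (R : ℝ) :
    circleAverage (fun z => (f z).re) c R = (f c).re := by
  have hint : CircleIntegrable f c R := hf.continuous.continuousOn.circleIntegrable'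
  rw [← hf.diffContOnCl.circleAverage]
  exact reCLM.circleAverage_comp_comm hint

open Real in
theorem statement_9 (f : ℂ → ℂ) (hf : Differentiable ℂ f)
    (hreal : ∀ x : ℝ, (f x).im = 0) :
    (2 / π) * ∫ x in (0 : ℝ)..(π / 2),
        (f ((Real.cos x : ℂ) * Complex.exp (Complex.I * x))).re =
      (f (1 / 2)).re := by
  set G : ℂ → ℝ := fun z => (f z).re
  have hG : ∀ z, G (conj z) = G z := fun z => by
    simp only [G, hf.apply_conj_of_im_eq_zero hreal, conj_re]
  have hint : IntervalIntegrable (fun θ => G (circleMap (1 / 2) (1 / 2) θ)) volume 0 π :=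
    (continuous_re.comp (hf.continuous.comp (continuous_circleMap _ _))).intervalIntegrable _ _
  calc (2 / π) * ∫ x in (0 : ℝ)..(π / 2), G ((Real.cos x : ℂ) * exp (I * x))
      = (2 / π) * ∫ x in (0 : ℝ)..(π / 2), G (circleMap (1 / 2) (1 / 2) (2 * x)) := by
        simp_rw [ofReal_cos_mul_exp_I_mul]
    _ = π⁻¹ * ∫ θ in 0..π, G (circleMap (1 / 2) (1 / 2) θ) := by
        rw [intervalIntegral.integral_comp_mul_left (f := fun θ => G (circleMap (1 / 2) (1 / 2) θ))
          two_ne_zero, mul_zero, mul_div_cancel₀ _ two_ne_zero, smul_eq_mul]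
        field_simp
    _ = circleAverage G (1 / 2) (1 / 2) :=
        (circleAverage_eq_inv_pi_smul_integral_of_conj_invariant hG (by simp [map_ofNat]) hint).symm
    _ = (f (1 / 2)).re := hf.circleAverage_re _ _
end

section
/- Let f : ℂ → ℂ be entire (complex differentiable on all of ℂ) and map real numbers to real numbers, and let k ≥ 1 be a natural number. Then (2/π) · ∫_0^{π/2} sin(2 k x) · Im[ f( (cos x) · e^{i x} ) ] dx = (1 / (2^{k+1} · k!)) · Re[ f^{(k)}(1/2) ], where f^{(k)} denotes the k-th complex iterated derivative of f. -/
/-!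
On the circle `|z - 1/2| = 1/2`, parametrised as `cos x · e^{ix} = (1 + e^{2ix}) / 2`, the Taylor
expansion of `f` at `1/2` becomes an absolutely convergent sine series
`Im f = ∑ aₙ 2⁻ⁿ sin (2nx)`, where `aₙ = f⁽ⁿ⁾(1/2) / n!` is real because `f` is real on `ℝ`.
Integrating termwise against `sin (2kx)`, orthogonality of the sines on `[0, π/2]` leaves only the
`k`-th term.
-/

open Real Nat

theorem Complex.im_deriv_ofReal_eq_zero {g : ℂ → ℂ} {x : ℝ} (hg : DifferentiableAt ℂ g x)
    (h : ∀ t : ℝ, (g t).im = 0) : (deriv g x).im = 0 := by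
  have hderiv : HasDerivAt (fun t : ℝ => (g t).im) (deriv g x).im x :=
    (Complex.imCLM.hasFDerivAt.comp_hasDerivAt x hg.hasDerivAt.comp_ofReal :)
  simp only [h] at hderiv
  exact hderiv.unique (hasDerivAt_const x 0)

theorem Complex.im_iteratedDeriv_ofReal_eq_zero {f : ℂ → ℂ} (hf : Differentiable ℂ f)
    (h : ∀ t : ℝ, (f t).im = 0) (n : ℕ) (x : ℝ) : (iteratedDeriv n f x).im = 0 := by
  induction n generalizing x with
  | zero => simpa using h x
  | succ n ih =>
    rw [iteratedDeriv_succ]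
    exact im_deriv_ofReal_eq_zero
      ((hf.contDiff (n := ⊤)).differentiable_iteratedDeriv n
        (by exact_mod_cast WithTop.coe_lt_top _) _) ih

theorem Complex.summable_norm_taylorSeries_of_entire {f : ℂ → ℂ} (hf : Differentiable ℂ f)
    (c z : ℂ) : Summable fun n => ‖(n ! : ℂ)⁻¹ * iteratedDeriv n f c * z ^ n‖ := by
  -- the terms of the series at `c + 2 * z` are bounded, so at `c + z` they are dominated by `2⁻ⁿ`
  have hbdd : (fun n => (n ! : ℂ)⁻¹ • (2 * z) ^ n • iteratedDeriv n f c) =O[Filter.atTop]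
      fun n => ((n ^ 0 : ℕ) : ℂ) := by
    simpa only [pow_zero, Nat.cast_one, add_sub_cancel_left] using
      (hasSum_taylorSeries_of_entire hf c (c + 2 * z)).summable.tendsto_atTop_zero.isBigO_one ℂ
  convert summable_norm_mul_geometric_of_norm_lt_one' (r := (1 / 2 : ℂ)) (by norm_num) hbdd
    using 2 with n
  have htwo : (2 : ℂ) ^ n * (1 / 2) ^ n = 1 := by rw [← mul_pow]; norm_num
  simp only [smul_eq_mul, mul_pow]
  congr 1
  linear_combination (-(n ! : ℂ)⁻¹ * z ^ n * iteratedDeriv n f c) * htwo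

theorem integral_cos_int_mul_zero_pi (j : ℤ) :
    ∫ θ in (0 : ℝ)..π, cos (j * θ) = if j = 0 then π else 0 := by
  split_ifs with hj
  · simp [hj]
  · have hj' : (j : ℝ) ≠ 0 := by exact_mod_cast hj
    rw [intervalIntegral.integral_comp_mul_left (fun θ => cos θ) hj', integral_cos]
    simp [sin_int_mul_pi]

theorem integral_sin_nat_mul_mul_sin_nat_mul_zero_pi {m : ℕ} (hm : m ≠ 0) (n : ℕ) :
    ∫ θ in (0 : ℝ)..π, sin (m * θ) * sin (n * θ) = if m = n then π / 2 else 0 := by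
  have hprod : ∀ θ : ℝ, sin (m * θ) * sin (n * θ)
      = (cos (((m - n : ℤ) : ℝ) * θ) - cos (((m + n : ℤ) : ℝ) * θ)) / 2 := fun θ => by
    push_cast
    rw [sub_mul, add_mul, cos_sub, cos_add]
    ring
  simp_rw [hprod]
  rw [intervalIntegral.integral_div,
    intervalIntegral.integral_sub ((by fun_prop : Continuous _).intervalIntegrable _ _)
      ((by fun_prop : Continuous _).intervalIntegrable _ _),
    integral_cos_int_mul_zero_pi, integral_cos_int_mul_zero_pi]
  have : (m : ℤ) + n ≠ 0 := by omega
  simp only [this, if_false, sub_eq_zero, Nat.cast_inj]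
  split_ifs <;> simp

theorem integral_sin_nat_mul_mul_zero_pi_of_hasSum {a : ℕ → ℝ} {g : ℝ → ℝ}
    (ha : Summable fun n => |a n|) (hg : ∀ θ, HasSum (fun n => a n * sin (n * θ)) (g θ))
    {k : ℕ} (hk : k ≠ 0) : ∫ θ in (0 : ℝ)..π, sin (k * θ) * g θ = π / 2 * a k := by
  have hterm : HasSum (fun n => ∫ θ in (0 : ℝ)..π, sin (k * θ) * (a n * sin (n * θ)))
      (∫ θ in (0 : ℝ)..π, sin (k * θ) * g θ) := by
    refine intervalIntegral.hasSum_integral_of_dominated_convergence (fun n _ => |a n|)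
      (fun n => (by fun_prop : Continuous _).aestronglyMeasurable) (fun n => ?_)
      (.of_forall fun _ _ => ha) intervalIntegrable_const
      (.of_forall fun θ _ => (hg θ).mul_left _)
    refine .of_forall fun θ _ => ?_
    calc ‖sin (k * θ) * (a n * sin (n * θ))‖ ≤ 1 * (|a n| * 1) := by
          simp only [norm_mul, Real.norm_eq_abs]
          gcongr <;> exact abs_sin_le_one _
      _ = |a n| := by ring
  have hcoeff (n : ℕ) : ∫ θ in (0 : ℝ)..π, sin (k * θ) * (a n * sin (n * θ))
      = if n = k then π / 2 * a k else 0 := by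
    simp_rw [mul_left_comm _ (a n)]
    rw [intervalIntegral.integral_const_mul, integral_sin_nat_mul_mul_sin_nat_mul_zero_pi hk]
    by_cases h : n = k
    · simp [h, mul_comm]
    · simp [h, Ne.symm h]
  simp_rw [hcoeff] at hterm
  exact hterm.unique (hasSum_ite_eq k _)

theorem Complex.hasSum_im_comp_circle_of_entire {f : ℂ → ℂ} (hf : Differentiable ℂ f)
    (hreal : ∀ t : ℝ, (f t).im = 0) (x₀ r θ : ℝ) :
    HasSum (fun n => ((n ! : ℂ)⁻¹ * iteratedDeriv n f x₀).re * r ^ n * Real.sin (n * θ))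
      (f (x₀ + r * exp (θ * I))).im := by
  convert hasSum_im (hasSum_taylorSeries_of_entire hf x₀ (x₀ + r * exp (θ * I))) using 2 with n
  have hcoeff_im : ((n ! : ℂ)⁻¹ * iteratedDeriv n f x₀).im = 0 := by
    rw [← ofReal_natCast, ← ofReal_inv, im_ofReal_mul, im_iteratedDeriv_ofReal_eq_zero hf hreal,
      mul_zero]
  have hpow : (r * exp (θ * I)) ^ n = (r ^ n : ℝ) * exp ((n * θ : ℝ) * I) := by
    rw [mul_pow, ← exp_nat_mul]; push_cast; ring_nf
  rw [add_sub_cancel_left, smul_eq_mul, smul_eq_mul, hpow,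
    show ∀ a b c d : ℂ, a * (b * c * d) = b * (a * d * c) by intros; ring,
    im_ofReal_mul, mul_im, hcoeff_im, exp_ofReal_mul_I_im, zero_mul, add_zero]
  ring

theorem Complex.integral_sin_nat_mul_mul_im_comp_circle_of_entire {f : ℂ → ℂ}
    (hf : Differentiable ℂ f) (hreal : ∀ t : ℝ, (f t).im = 0) (x₀ r : ℝ) {k : ℕ} (hk : k ≠ 0) :
    ∫ θ in (0 : ℝ)..π, Real.sin (k * θ) * (f (x₀ + r * exp (θ * I))).im
      = π / 2 * (((k ! : ℂ)⁻¹ * iteratedDeriv k f x₀).re * r ^ k) := by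
  refine integral_sin_nat_mul_mul_zero_pi_of_hasSum ?_
    (fun θ => hasSum_im_comp_circle_of_entire hf hreal x₀ r θ) hk
  refine .of_nonneg_of_le (fun n => abs_nonneg _) (fun n => ?_)
    (summable_norm_taylorSeries_of_entire hf x₀ r)
  rw [abs_mul, abs_pow, norm_mul, norm_pow, norm_real, Real.norm_eq_abs]
  gcongr
  exact abs_re_le_norm _

theorem Complex.cos_mul_exp_mul_I (z : ℂ) : cos z * exp (z * I) = (1 + exp (2 * z * I)) / 2 := by
  rw [cos, show 2 * z * I = z * I + z * I by ring, exp_add, neg_mul, exp_neg]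
  field_simp [exp_ne_zero]
  ring

open Real in
theorem statement_12 (f : ℂ → ℂ) (hf : Differentiable ℂ f)
    (hreal : ∀ x : ℝ, (f x).im = 0) (k : ℕ) (hk : 1 ≤ k) :
    (2 / π) * ∫ x in (0 : ℝ)..(π / 2),
        Real.sin (2 * k * x) * (f ((Real.cos x : ℂ) * Complex.exp (Complex.I * x))).im =
      (1 / (2 ^ (k + 1) * (k.factorial : ℝ))) * (iteratedDeriv k f (1 / 2)).re := by
  set G : ℝ → ℝ := fun θ =>
    Real.sin (k * θ) * (f ((1 / 2 : ℝ) + (1 / 2 : ℝ) * Complex.exp (θ * Complex.I))).im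
  have hintegrand (x : ℝ) : Real.sin (2 * k * x) *
      (f ((Real.cos x : ℂ) * Complex.exp (Complex.I * x))).im = G (2 * x) := by
    rw [Complex.ofReal_cos, mul_comm Complex.I, Complex.cos_mul_exp_mul_I]
    simp only [G]
    push_cast
    ring_nf
  have hk0 : k ≠ 0 := Nat.one_le_iff_ne_zero.mp hk
  calc (2 / π) * ∫ x in (0 : ℝ)..(π / 2),
        Real.sin (2 * k * x) * (f ((Real.cos x : ℂ) * Complex.exp (Complex.I * x))).im
      = (2 / π) * (2⁻¹ * ∫ θ in (0 : ℝ)..π, G θ) := by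
        simp_rw [hintegrand, intervalIntegral.integral_comp_mul_left G two_ne_zero]
        rw [mul_zero, mul_div_cancel₀ _ two_ne_zero, smul_eq_mul]
    _ = (2 / π) *
          (2⁻¹ * (π / 2 * (((k ! : ℂ)⁻¹ * iteratedDeriv k f (1 / 2 : ℝ)).re * (1 / 2) ^ k))) := by
        rw [Complex.integral_sin_nat_mul_mul_im_comp_circle_of_entire hf hreal _ _ hk0]
    _ = _ := by
        rw [← Complex.ofReal_natCast, ← Complex.ofReal_inv, Complex.re_ofReal_mul]
        push_cast
        simp only [one_div, inv_pow]
        field_simp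
        ring
end

section
/- Let c > 0 be a real number. For every real x with 0 < x < 2c, the series Σ_{n=1}^{∞} cos(n π x / c) / n converges and its sum equals −ln( 2 · sin(π x / (2c)) ). -/
/-!
With `z = exp (iθ)`, the partial sums of `∑ zⁿ/n` converge by Dirichlet's test (the geometric sums
`∑ zⁱ` are bounded and `1/n` decreases to `0`). Abel's limit theorem identifies the sum with
`lim_{r → 1⁻} -log (1 - r z) = -log (1 - z)`, and taking real parts gives
`-log |1 - exp (iθ)| = -log (2 sin (θ/2))`.
-/

open Filter Finset Topology

lemma norm_geom_sum_le_of_norm_le_one {𝕜 : Type*} [NormedDivisionRing 𝕜] {z : 𝕜}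
    (hz : ‖z‖ ≤ 1) (hz1 : z ≠ 1) (n : ℕ) : ‖∑ i ∈ range n, z ^ i‖ ≤ 2 / ‖z - 1‖ := by
  rw [geom_sum_eq hz1, norm_div]
  gcongr
  calc ‖z ^ n - 1‖ ≤ ‖z‖ ^ n + 1 := by simpa using norm_sub_le (z ^ n) 1
    _ ≤ 2 := by linarith [pow_le_one₀ (norm_nonneg z) hz (n := n)]

namespace Complex

lemma cauchySeq_sum_pow_div_natCast {z : ℂ} (hz : ‖z‖ ≤ 1) (hz1 : z ≠ 1) :
    CauchySeq fun n ↦ ∑ i ∈ range n, z ^ i / i := by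
  have hanti : Antitone fun n : ℕ ↦ 1 / ((n : ℝ) + 1) := fun a b hab ↦
    one_div_le_one_div_of_le (by positivity) (by gcongr)
  have hbound (n : ℕ) : ‖∑ i ∈ range n, z ^ (i + 1)‖ ≤ 2 / ‖z - 1‖ := by
    simp_rw [pow_succ, ← sum_mul, norm_mul]
    exact (mul_le_of_le_one_right (norm_nonneg _) hz).trans
      (norm_geom_sum_le_of_norm_le_one hz hz1 n)
  rw [← cauchySeq_shift 1]
  convert hanti.cauchySeq_series_mul_of_tendsto_zero_of_bounded
    tendsto_one_div_add_atTop_nhds_zero_nat hbound using 2 with n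
  rw [sum_range_succ']
  simp [real_smul, div_eq_inv_mul]

lemma one_sub_mem_slitPlane {z : ℂ} (hz : ‖z‖ ≤ 1) (hz1 : z ≠ 1) : 1 - z ∈ slitPlane := by
  refine mem_slitPlane_iff.mpr (Or.inl ?_)
  rw [sub_re, one_re, sub_pos]
  refine (re_le_norm z |>.trans hz).lt_of_ne fun hre ↦ hz1 ?_
  have him : z.im = 0 := abs_re_eq_norm.mp (by rw [hre, abs_one]; linarith [re_le_norm z])
  exact ext (by simp [hre]) (by simp [him])

theorem tendsto_sum_pow_div_natCast {z : ℂ} (hz : ‖z‖ ≤ 1) (hz1 : z ≠ 1) :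
    Tendsto (fun n ↦ ∑ i ∈ range n, z ^ i / i) atTop (𝓝 (-log (1 - z))) := by
  obtain ⟨L, hL⟩ := cauchySeq_tendsto_of_complete (cauchySeq_sum_pow_div_natCast hz hz1)
  convert hL
  have habel := tendsto_map'_iff.mp (tendsto_tsum_powerSeries_nhdsWithin_lt hL)
  have hinside : ∀ᶠ r : ℝ in 𝓝[<] 1,
      -log (1 - r * z) = ∑' n : ℕ, z ^ n / n * (r : ℂ) ^ n := by
    filter_upwards [Ioo_mem_nhdsLT (show (0 : ℝ) < 1 by norm_num)] with r hr
    have hrz : ‖(r : ℂ) * z‖ < 1 := by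
      rw [norm_mul, norm_real, Real.norm_of_nonneg hr.1.le]
      exact (mul_le_of_le_one_right hr.1.le hz).trans_lt hr.2
    rw [← (hasSum_taylorSeries_neg_log hrz).tsum_eq]
    simp_rw [mul_pow, div_mul_eq_mul_div, mul_comm]
  have hcont : ContinuousAt (fun r : ℝ ↦ -log (1 - r * z)) 1 := by
    refine (continuousAt_clog ?_).comp (by fun_prop) |>.neg
    simpa using one_sub_mem_slitPlane hz hz1
  refine tendsto_nhds_unique ?_ habel
  refine Tendsto.congr' hinside ?_
  simpa using hcont.tendsto.mono_left nhdsWithin_le_nhds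

lemma re_exp_I_mul_pow (θ : ℝ) (n : ℕ) : (exp (I * θ) ^ n).re = Real.cos (n * θ) := by
  rw [← exp_nat_mul, ← exp_ofReal_mul_I_re]
  congr 2
  push_cast
  ring

end Complex

open Real in
theorem Real.tendsto_sum_cos_mul_div_natCast {θ : ℝ} (hθ : sin (θ / 2) ≠ 0) :
    Tendsto (fun N : ℕ ↦ ∑ n ∈ Icc 1 N, cos (n * θ) / n) atTop
      (𝓝 (-log (2 * sin (θ / 2)))) := by
  set z := Complex.exp (Complex.I * θ)
  have hnorm : ‖z - 1‖ = |2 * sin (θ / 2)| := Complex.norm_exp_I_mul_ofReal_sub_one θ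
  have hz1 : z ≠ 1 := fun h ↦ hθ <| by simpa [h] using hnorm
  have hre := (Complex.continuous_re.tendsto _).comp
    (Complex.tendsto_sum_pow_div_natCast (Complex.norm_exp_I_mul_ofReal θ).le hz1)
  rw [← tendsto_add_atTop_iff_nat 1] at hre
  convert hre using 2 with N
  · rw [Function.comp_apply, Complex.re_sum, Nat.range_succ_eq_Icc_zero,
      ← sum_Ioc_add_eq_sum_Icc N.zero_le, ← Icc_add_one_left_eq_Ioc]
    simp [Complex.re_exp_I_mul_pow]
  · rw [Complex.neg_re, Complex.log_re, norm_sub_rev, hnorm, log_abs]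

open Real Filter in
theorem statement_14 (c : ℝ) (hc : 0 < c) (x : ℝ) (hx : 0 < x) (hx' : x < 2 * c) :
    Tendsto (fun N : ℕ => ∑ n ∈ Finset.Icc 1 N, Real.cos (n * π * x / c) / n)
      atTop (nhds (-Real.log (2 * Real.sin (π * x / (2 * c))))) := by
  have hhalf : π * x / c / 2 = π * x / (2 * c) := by field_simp
  have hsin : sin (π * x / c / 2) ≠ 0 := by
    refine (sin_pos_of_pos_of_lt_pi (by positivity) ?_).ne'
    rw [hhalf, div_lt_iff₀ (by positivity)]
    nlinarith [pi_pos]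
  convert tendsto_sum_cos_mul_div_natCast hsin using 4 with N n
  · rw [mul_assoc, mul_div_assoc]
  · rw [hhalf]
end

section
/- Let c > 0 be a real number. For every real x with |x| < c/2, the series Σ_{n=0}^{∞} (−1)^n · cos( (2n+1) π x / c ) / (2n+1) converges and its sum equals π/4. -/
/-!
Put `θ = π x / c`, so `|θ| < π / 2` and `cos` does not vanish between `0` and `θ`. Writing
`cos ((2n+1)θ) / (2n+1) = 1 / (2n+1) - ∫₀^θ sin ((2n+1)t) dt` and summing the alternating sine
sum in closed form, `2 cos t · ∑_{n<N} (-1)ⁿ sin ((2n+1)t) = -(-1)ᴺ sin (2Nt)`, the `N`-th partial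
sum is the `N`-th partial sum of Leibniz's series plus `±∫₀^θ sin (2Nt) / (2 cos t) dt`. The
remainder tends to `0` by the Riemann–Lebesgue lemma, and Leibniz's series sums to `π / 4`.
-/

open Real Filter Topology MeasureTheory Set

theorem tendsto_integral_mul_sin_atTop {f : ℝ → ℝ} (hf : Integrable f) :
    Tendsto (fun k : ℝ => ∫ t, f t * sin (k * t)) atTop (𝓝 0) := by
  -- Mathlib's Riemann–Lebesgue lemma is about `∫ 𝐞 (-(v w)) f v` with `𝐞 y = exp (2π i y)`.
  have hw : Tendsto (fun k : ℝ => -(k / (2 * π))) atTop (cocompact ℝ) :=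
    (tendsto_neg_atTop_atBot.comp (tendsto_id.atTop_div_const (by positivity))).mono_right
      atBot_le_cocompact
  have hRL := (Complex.continuous_im.tendsto 0).comp
    ((Real.tendsto_integral_exp_smul_cocompact fun t => (f t : ℂ)).comp hw)
  rw [Complex.zero_im] at hRL
  refine hRL.congr fun k => ?_
  have hint := (Real.fourierIntegral_convergent_iff (f := fun t => (f t : ℂ)) (-(k / (2 * π)))).2
    hf.ofReal
  simp only [Real.inner_apply] at hint
  simp only [Function.comp_apply]
  rw [← Complex.imCLM_apply, ← ContinuousLinearMap.integral_comp_comm _ hint]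
  congr 1 with t
  rw [Complex.imCLM_apply, Circle.smul_def, Real.fourierChar_apply, smul_eq_mul,
    Complex.im_mul_ofReal, show 2 * π * -(t * -(k / (2 * π))) = k * t by field_simp, Complex.exp_ofReal_mul_I_im,
    mul_comm]

theorem tendsto_setIntegral_mul_sin_atTop {f : ℝ → ℝ} {s : Set ℝ} (hs : MeasurableSet s)
    (hf : IntegrableOn f s) :
    Tendsto (fun k : ℝ => ∫ t in s, f t * sin (k * t)) atTop (𝓝 0) := by
  simpa only [← integral_indicator hs, indicator_mul_left] using
    tendsto_integral_mul_sin_atTop (hf.integrable_indicator hs)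

theorem tendsto_intervalIntegral_mul_sin_atTop {f : ℝ → ℝ} {a b : ℝ}
    (hf : IntervalIntegrable f volume a b) :
    Tendsto (fun k : ℝ => ∫ t in a..b, f t * sin (k * t)) atTop (𝓝 0) := by
  simpa only [intervalIntegral, sub_zero] using
    (tendsto_setIntegral_mul_sin_atTop measurableSet_Ioc hf.1).sub
      (tendsto_setIntegral_mul_sin_atTop measurableSet_Ioc hf.2)

theorem two_cos_mul_sum_neg_one_pow_mul_sin (N : ℕ) (t : ℝ) :
    2 * cos t * ∑ n ∈ Finset.range N, (-1 : ℝ) ^ n * sin ((2 * n + 1) * t) =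
      -(-1) ^ N * sin (2 * N * t) := by
  induction N with
  | zero => simp
  | succ N ih =>
    rw [Finset.sum_range_succ, mul_add, ih]
    push_cast
    rw [show 2 * ((N : ℝ) + 1) * t = (2 * N + 1) * t + t by ring,
      show 2 * (N : ℝ) * t = (2 * N + 1) * t - t by ring, sin_add, sin_sub]
    ring

theorem integral_sin_const_mul (k θ : ℝ) :
    ∫ t in (0 : ℝ)..θ, sin (k * t) = (1 - cos (k * θ)) / k := by
  rcases eq_or_ne k 0 with rfl | hk
  · simp
  · rw [intervalIntegral.integral_comp_mul_left sin hk, mul_zero, integral_sin, cos_zero,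
      smul_eq_mul, inv_mul_eq_div]

theorem sum_neg_one_pow_mul_cos_div_eq_add_integral {θ : ℝ} (hcos : ∀ t ∈ uIcc 0 θ, cos t ≠ 0)
    (N : ℕ) :
    ∑ n ∈ Finset.range N, (-1 : ℝ) ^ n * cos ((2 * n + 1) * θ) / (2 * n + 1) =
      ∑ n ∈ Finset.range N, (-1 : ℝ) ^ n / (2 * n + 1) +
        (-1) ^ N * ∫ t in (0 : ℝ)..θ, (2 * cos t)⁻¹ * sin (2 * N * t) := by
  have hterm (n : ℕ) : (-1 : ℝ) ^ n * cos ((2 * n + 1) * θ) / (2 * n + 1) =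
      (-1) ^ n / (2 * n + 1) - ∫ t in (0 : ℝ)..θ, (-1) ^ n * sin ((2 * n + 1) * t) := by
    rw [intervalIntegral.integral_const_mul, integral_sin_const_mul]
    field_simp
    ring
  rw [Finset.sum_congr rfl fun n _ => hterm n, Finset.sum_sub_distrib,
    ← intervalIntegral.integral_finsetSum fun n _ =>
      (Continuous.intervalIntegrable (by fun_prop) _ _), sub_eq_add_neg,
    ← intervalIntegral.integral_const_mul, ← intervalIntegral.integral_neg]
  congr 1
  refine intervalIntegral.integral_congr fun t ht => ?_
  have h2 : 2 * cos t ≠ 0 := mul_ne_zero two_ne_zero (hcos t ht)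
  rw [← mul_right_inj' h2, mul_neg, two_cos_mul_sum_neg_one_pow_mul_sin, mul_left_comm,
    mul_inv_cancel_left₀ h2, neg_mul, neg_neg]

open Real Filter in
theorem statement_16 (c : ℝ) (hc : 0 < c) (x : ℝ) (hx : |x| < c / 2) :
    Tendsto (fun N : ℕ => ∑ n ∈ Finset.range N,
        (-1 : ℝ) ^ n * Real.cos ((2 * n + 1) * π * x / c) / (2 * n + 1))
      atTop (nhds (π / 4)) := by
  set θ := π * x / c
  have hθ : θ ∈ Ioo (-(π / 2)) (π / 2) := by
    rw [mem_Ioo, ← abs_lt, abs_div, abs_mul, abs_of_pos pi_pos, abs_of_pos hc, div_lt_iff₀ hc]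
    nlinarith [pi_pos]
  have hcos (t : ℝ) (ht : t ∈ uIcc 0 θ) : cos t ≠ 0 :=
    (cos_pos_of_mem_Ioo (ordConnected_Ioo.uIcc_subset (by simp [pi_pos]) hθ ht)).ne'
  have hRL : Tendsto (fun N : ℕ => ∫ t in (0 : ℝ)..θ, (2 * cos t)⁻¹ * sin (2 * N * t))
      atTop (𝓝 0) :=
    (tendsto_intervalIntegral_mul_sin_atTop
      ((continuous_const.mul continuous_cos).continuousOn.inv₀
        fun t ht => mul_ne_zero two_ne_zero (hcos t ht)).intervalIntegrable).comp
      (tendsto_natCast_atTop_atTop.const_mul_atTop two_pos)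
  have hrem : Tendsto
      (fun N : ℕ => (-1 : ℝ) ^ N * ∫ t in (0 : ℝ)..θ, (2 * cos t)⁻¹ * sin (2 * N * t))
      atTop (𝓝 0) := by
    rw [tendsto_zero_iff_norm_tendsto_zero]
    simpa using hRL.norm
  have harg (n : ℕ) : (2 * (n : ℝ) + 1) * π * x / c = (2 * n + 1) * θ := by ring
  simp only [harg, sum_neg_one_pow_mul_cos_div_eq_add_integral hcos]
  simpa using tendsto_sum_pi_div_four.add hrem
end

section
/- Let a ∈ ℝ, let f : ℝ → ℝ be continuous, and let m ≥ 1 be a natural number. Define the operator T by (T g)(x) = ∫_a^x g(ξ) · ξ dξ. Then the m-fold iterate of T applied to f satisfies, for every x ∈ ℝ: (T^m f)(x) = ∫_a^x ( (x² − ξ²)^{m−1} / (2^{m−1} · (m−1)!) ) · f(ξ) · ξ dξ. -/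
/-!
Integrating by parts against the kernel `(x² - ξ²)ᵏ⁺¹ / (2ᵏ⁺¹ (k+1)!)`, whose `ξ`-derivative is
`-ξ (x² - ξ²)ᵏ / (2ᵏ k!)` and which vanishes at `ξ = x`, turns one more application of `T` on the
inside into one more power of `x² - ξ²` in the kernel; the boundary terms vanish because `T g`
vanishes at `a`.
-/

open intervalIntegral

noncomputable def repeatedIntegralKernel (k : ℕ) (x ξ : ℝ) : ℝ :=
  (x ^ 2 - ξ ^ 2) ^ k / (2 ^ k * (k.factorial : ℝ))

lemma repeatedIntegralKernel_succ_self (k : ℕ) (x : ℝ) :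
    repeatedIntegralKernel (k + 1) x x = 0 := by
  simp [repeatedIntegralKernel]

lemma hasDerivAt_neg_repeatedIntegralKernel_succ (k : ℕ) (x ξ : ℝ) :
    HasDerivAt (fun η => -repeatedIntegralKernel (k + 1) x η)
      (repeatedIntegralKernel k x ξ * ξ) ξ := by
  have h : HasDerivAt (fun η => -repeatedIntegralKernel (k + 1) x η) _ ξ :=
    ((((hasDerivAt_pow 2 ξ).const_sub (x ^ 2)).pow (k + 1)).div_const
      (2 ^ (k + 1) * ((k + 1).factorial : ℝ))).neg
  refine h.congr_deriv ?_
  simp only [repeatedIntegralKernel, Nat.factorial_succ, Nat.cast_mul, Nat.cast_succ,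
    Nat.add_sub_cancel]
  field_simp
  ring

lemma integral_repeatedIntegralKernel_mul_primitive {g : ℝ → ℝ} (hg : Continuous g)
    (k : ℕ) (a x : ℝ) :
    ∫ ξ in a..x, repeatedIntegralKernel k x ξ * (∫ η in a..ξ, g η) * ξ =
      ∫ ξ in a..x, repeatedIntegralKernel (k + 1) x ξ * g ξ := by
  have hv' : Continuous fun ξ => repeatedIntegralKernel k x ξ * ξ := by
    unfold repeatedIntegralKernel; fun_prop
  have parts := integral_mul_deriv_eq_deriv_mul
    (fun ξ _ => (hg.integral_hasStrictDerivAt a ξ).hasDerivAt)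
    (fun ξ _ => hasDerivAt_neg_repeatedIntegralKernel_succ k x ξ)
    (hg.intervalIntegrable a x) (hv'.intervalIntegrable a x)
  simp only [repeatedIntegralKernel_succ_self, integral_same, neg_zero, mul_zero, zero_mul,
    sub_zero, zero_sub, mul_neg, integral_neg, neg_neg] at parts
  calc _ = ∫ ξ in a..x, (∫ η in a..ξ, g η) * (repeatedIntegralKernel k x ξ * ξ) := by
        congr 1; ext ξ; ring
    _ = _ := by rw [parts]; congr 1; ext ξ; ring

lemma iterate_succ_apply_eq_integral_repeatedIntegralKernel (a : ℝ)
    (T : (ℝ → ℝ) → (ℝ → ℝ)) (hT : ∀ g : ℝ → ℝ, ∀ x : ℝ, T g x = ∫ ξ in a..x, g ξ * ξ)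
    (k : ℕ) {f : ℝ → ℝ} (hf : Continuous f) (x : ℝ) :
    T^[k + 1] f x = ∫ ξ in a..x, repeatedIntegralKernel k x ξ * f ξ * ξ := by
  induction k generalizing f with
  | zero => simp [hT, repeatedIntegralKernel]
  | succ k ih =>
    have hTf : T f = fun ξ => ∫ η in a..ξ, f η * η := funext (hT f)
    have hTf_cont : Continuous (T f) :=
      hTf ▸ continuous_primitive (fun _ _ => (hf.mul continuous_id).intervalIntegrable _ _) a
    rw [Function.iterate_succ_apply, ih hTf_cont, hTf]
    simpa only [mul_assoc] using
      integral_repeatedIntegralKernel_mul_primitive (g := fun ξ => f ξ * ξ) (by fun_prop) k a x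

theorem statement_19 (a : ℝ) (f : ℝ → ℝ) (hf : Continuous f)
    (m : ℕ) (hm : 1 ≤ m)
    (T : (ℝ → ℝ) → (ℝ → ℝ))
    (hT : ∀ g : ℝ → ℝ, ∀ x : ℝ, T g x = ∫ ξ in a..x, g ξ * ξ) (x : ℝ) :
    (T^[m] f) x =
      ∫ ξ in a..x,
        ((x ^ 2 - ξ ^ 2) ^ (m - 1) / (2 ^ (m - 1) * ((m - 1).factorial : ℝ))) * f ξ * ξ := by
  obtain ⟨k, rfl⟩ : ∃ k, m = k + 1 := ⟨m - 1, by omega⟩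
  exact iterate_succ_apply_eq_integral_repeatedIntegralKernel a T hT k hf x
end
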